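/- Let P ∈ ℝⁿˣⁿ be symmetric positive semidefinite, q ∈ range(P), s ∈ ℝ, and F(x) = xᵀPx/2 + qᵀx + s. Then for any level value ľ ∈ ℝ, a vector x ∈ range(P) satisfies F(x) = ľ if and only if qᵀP†q − 2s + 2ľ ≥ 0 and x = −P†q + √(qᵀP†q − 2s + 2ľ)·P^{†/2}ρ for some ρ ∈ range(P) with ‖ρ‖ = 1 (or x = −P†q if the square-root term is zero). -/

import Mathlib

/-!
Put `u = P†q + x` and `c = qᵀP†q − 2s + 2ľ`. Since `P P† q = q`, completing the square turns
`F(x) = ľ` into `uᵀPu = c`, and `u ∈ range P`. Because `P^{†/2} P P^{†/2} = P P†` is the orthogonal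
projection onto `range P`, the map `ρ ↦ P^{†/2} ρ` sends `range P` into itself with
`(P^{†/2}ρ)ᵀ P (P^{†/2}ρ) = ρᵀρ`, and `u ↦ P^{†/2} P u` inverts it there. Hence the level set is the
image of the sphere of radius `√c` in `range P`, which is empty for `c < 0` and `{0}` for `c = 0`.
-/

open Matrix

/-- The four Penrose conditions characterizing the Moore–Penrose pseudoinverse. -/
def IsMoorePenroseInv {m n : ℕ} (A : Matrix (Fin m) (Fin n) ℝ)
    (Ad : Matrix (Fin n) (Fin m) ℝ) : Prop :=
  A * Ad * A = A ∧ Ad * A * Ad = Ad ∧ (A * Ad)ᵀ = A * Ad ∧ (Ad * A)ᵀ = Ad * A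

theorem dotProduct_mulVec_of_transpose_eq_self {ι R : Type*} [Fintype ι] [CommSemiring R]
    {M : Matrix ι ι R} (hM : Mᵀ = M) (a b : ι → R) : a ⬝ᵥ M *ᵥ b = M *ᵥ a ⬝ᵥ b := by
  rw [dotProduct_mulVec, ← mulVec_transpose, hM]

theorem dotProduct_mulVec_add_self {ι R : Type*} [Fintype ι] [CommRing R]
    {M : Matrix ι ι R} (hM : Mᵀ = M) (d x : ι → R) :
    (d + x) ⬝ᵥ M *ᵥ (d + x) = x ⬝ᵥ M *ᵥ x + 2 * (M *ᵥ d ⬝ᵥ x) + d ⬝ᵥ M *ᵥ d := by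
  rw [mulVec_add, add_dotProduct, dotProduct_add, dotProduct_add,
    dotProduct_mulVec_of_transpose_eq_self hM d x, dotProduct_comm x (M *ᵥ d)]
  ring

namespace IsMoorePenroseInv

section Rectangular

variable {m n : ℕ} {A : Matrix (Fin m) (Fin n) ℝ} {G G' : Matrix (Fin n) (Fin m) ℝ}

theorem transpose (h : IsMoorePenroseInv A G) : IsMoorePenroseInv Aᵀ Gᵀ := by
  obtain ⟨h₁, h₂, h₃, h₄⟩ := h
  refine ⟨?_, ?_, ?_, ?_⟩
  · rw [← transpose_mul, ← transpose_mul, ← Matrix.mul_assoc, h₁]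
  · rw [← transpose_mul, ← transpose_mul, ← Matrix.mul_assoc, h₂]
  · rw [← transpose_mul, transpose_transpose, h₄]
  · rw [← transpose_mul, transpose_transpose, h₃]

theorem mul_mulVec_of_mem_range (h : IsMoorePenroseInv A G) {x : Fin m → ℝ}
    (hx : x ∈ Set.range A.mulVec) : (A * G) *ᵥ x = x := by
  obtain ⟨y, rfl⟩ := hx
  rw [mulVec_mulVec, h.1]

theorem unique (h : IsMoorePenroseInv A G) (h' : IsMoorePenroseInv A G') : G = G' := by
  obtain ⟨h₁, h₂, h₃, h₄⟩ := h
  obtain ⟨h₁', h₂', h₃', h₄'⟩ := h'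
  calc G = G * (A * G)ᵀ := by rw [h₃, ← Matrix.mul_assoc, h₂]
    _ = G * (A * G' * (A * G))ᵀ := by rw [← Matrix.mul_assoc, h₁']
    _ = G * A * G' := by
      rw [transpose_mul, h₃, h₃']; simp only [← Matrix.mul_assoc, h₂]
    _ = (G * A)ᵀ * (G' * A)ᵀ * G' := by
      rw [h₄, h₄', Matrix.mul_assoc (G * A), h₂']
    _ = (G' * (A * G * A))ᵀ * G' := by simp only [← transpose_mul, Matrix.mul_assoc]
    _ = G' := by rw [h₁, h₄', h₂']

end Rectangular

variable {n : ℕ} {A G S : Matrix (Fin n) (Fin n) ℝ}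

theorem transpose_eq_self (h : IsMoorePenroseInv A G) (hA : Aᵀ = A) : Gᵀ = G :=
  (hA ▸ h.transpose).unique h

theorem mul_comm_of_transpose_eq_self (h : IsMoorePenroseInv A G) (hA : Aᵀ = A) :
    G * A = A * G := by
  rw [← h.2.2.2, transpose_mul, hA, h.transpose_eq_self hA]

theorem mulVec_mem_range (h : IsMoorePenroseInv A G) (hA : Aᵀ = A) (v : Fin n → ℝ) :
    G *ᵥ v ∈ Set.range A.mulVec :=
  ⟨G *ᵥ (G *ᵥ v), by
    rw [mulVec_mulVec, mulVec_mulVec, ← h.mul_comm_of_transpose_eq_self hA, h.2.1]⟩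

theorem mul_mul_sqrt (h : IsMoorePenroseInv A G) (hA : Aᵀ = A) (hS : Sᵀ = S)
    (hSS : S * S = G) : A * G * S = S := by
  have hGQ : G * (A * G) = G := by rw [← Matrix.mul_assoc, h.2.1]
  have hQG : A * G * G = G := by rw [← h.mul_comm_of_transpose_eq_self hA, h.2.1]
  have hzero : (S - A * G * S) * (S - A * G * S)ᴴ = 0 := by
    rw [conjTranspose_eq_transpose_of_trivial, transpose_sub, transpose_mul, hS, h.2.2.1]
    calc (S - A * G * S) * (S - S * (A * G))
        = S * S - S * S * (A * G) - A * G * (S * S) + A * G * (S * S * (A * G)) := by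
          noncomm_ring
      _ = 0 := by rw [hSS, hGQ, hQG, sub_self, zero_sub, neg_add_cancel]
  exact (sub_eq_zero.mp (self_mul_conjTranspose_eq_zero.mp hzero)).symm

theorem sqrt_mul_mul_sqrt (h : IsMoorePenroseInv A G) (hA : Aᵀ = A) (hS : Sᵀ = S)
    (hSS : S * S = G) : S * A * S = A * G := by
  have hSQ : S * (A * G) = S := by
    simpa [hS, h.2.2.1] using congrArg Matrix.transpose (h.mul_mul_sqrt hA hS hSS)
  calc S * A * S = S * A * S * (A * G) := by rw [Matrix.mul_assoc (S * A), hSQ]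
    _ = S * A * S * (S * S) * A := by
      rw [← h.mul_comm_of_transpose_eq_self hA, hSS, Matrix.mul_assoc _ G]
    _ = S * (A * G) * S * A := by rw [← hSS]; noncomm_ring
    _ = A * G := by rw [hSQ, hSS, h.mul_comm_of_transpose_eq_self hA]

theorem sqrt_mulVec_mem_range (h : IsMoorePenroseInv A G) (hA : Aᵀ = A) (hS : Sᵀ = S)
    (hSS : S * S = G) (w : Fin n → ℝ) : S *ᵥ w ∈ Set.range A.mulVec :=
  ⟨G *ᵥ (S *ᵥ w), by
    rw [mulVec_mulVec, mulVec_mulVec, h.mul_mul_sqrt hA hS hSS]⟩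

theorem dotProduct_sqrt_mulVec (h : IsMoorePenroseInv A G) (hA : Aᵀ = A) (hS : Sᵀ = S)
    (hSS : S * S = G) {ρ : Fin n → ℝ} (hρ : ρ ∈ Set.range A.mulVec) :
    S *ᵥ ρ ⬝ᵥ A *ᵥ (S *ᵥ ρ) = ρ ⬝ᵥ ρ := by
  rw [← dotProduct_mulVec_of_transpose_eq_self hS, mulVec_mulVec, mulVec_mulVec,
    h.sqrt_mul_mul_sqrt hA hS hSS, h.mul_mulVec_of_mem_range hρ]

theorem sqrt_mulVec_sqrt_mulVec (h : IsMoorePenroseInv A G) (hA : Aᵀ = A) (hSS : S * S = G)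
    {u : Fin n → ℝ} (hu : u ∈ Set.range A.mulVec) : S *ᵥ (S *ᵥ (A *ᵥ u)) = u := by
  rw [mulVec_mulVec, hSS, mulVec_mulVec, h.mul_comm_of_transpose_eq_self hA,
    h.mul_mulVec_of_mem_range hu]

theorem dotProduct_self_sqrt_mulVec (h : IsMoorePenroseInv A G) (hA : Aᵀ = A) (hS : Sᵀ = S)
    (hSS : S * S = G) {u : Fin n → ℝ} (hu : u ∈ Set.range A.mulVec) :
    S *ᵥ (A *ᵥ u) ⬝ᵥ S *ᵥ (A *ᵥ u) = u ⬝ᵥ A *ᵥ u := by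
  rw [← dotProduct_mulVec_of_transpose_eq_self hS, h.sqrt_mulVec_sqrt_mulVec hA hSS hu,
    dotProduct_comm]

theorem dotProduct_mulVec_self_eq_iff (h : IsMoorePenroseInv A G) (hA : A.PosSemidef)
    (hS : Sᵀ = S) (hSS : S * S = G) {u : Fin n → ℝ} (hu : u ∈ Set.range A.mulVec) (c : ℝ) :
    u ⬝ᵥ A *ᵥ u = c ↔ 0 ≤ c ∧
      ((∃ ρ, ρ ∈ Set.range A.mulVec ∧ √(ρ ⬝ᵥ ρ) = 1 ∧ u = √c • S *ᵥ ρ) ∨ (√c = 0 ∧ u = 0)) := by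
  have hAT : Aᵀ = A := hA.1.eq
  constructor
  · intro huc
    have hc : 0 ≤ c := huc ▸ by simpa using hA.dotProduct_mulVec_nonneg u
    set w := S *ᵥ (A *ᵥ u)
    have hww : w ⬝ᵥ w = c := (h.dotProduct_self_sqrt_mulVec hAT hS hSS hu).trans huc
    have hSw : S *ᵥ w = u := h.sqrt_mulVec_sqrt_mulVec hAT hSS hu
    refine ⟨hc, ?_⟩
    rcases hc.eq_or_lt with hc0 | hcpos
    · refine Or.inr ⟨by rw [← hc0, Real.sqrt_zero], ?_⟩
      rw [← hSw, dotProduct_self_eq_zero.mp (hww.trans hc0.symm), mulVec_zero]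
    · have hsc : √c ≠ 0 := (Real.sqrt_pos.mpr hcpos).ne'
      refine Or.inl ⟨(√c)⁻¹ • w, ?_, ?_, ?_⟩
      · rw [← mulVec_smul]
        exact h.sqrt_mulVec_mem_range hAT hS hSS _
      · rw [smul_dotProduct, dotProduct_smul, hww, smul_eq_mul, smul_eq_mul, ← mul_assoc,
          ← mul_inv, Real.mul_self_sqrt hc, inv_mul_cancel₀ hcpos.ne', Real.sqrt_one]
      · rw [mulVec_smul, smul_smul, mul_inv_cancel₀ hsc, one_smul, hSw]
  · rintro ⟨hc, ⟨ρ, hρ, hρ1, rfl⟩ | ⟨hc0, rfl⟩⟩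
    · have hρρ : ρ ⬝ᵥ ρ = 1 := Real.sqrt_eq_one.mp hρ1
      rw [mulVec_smul, smul_dotProduct, dotProduct_smul, h.dotProduct_sqrt_mulVec hAT hS hSS hρ,
        hρρ, smul_eq_mul, smul_eq_mul, mul_one, Real.mul_self_sqrt hc]
    · rw [mulVec_zero, dotProduct_zero, eq_comm, ← Real.sqrt_eq_zero hc, hc0]

end IsMoorePenroseInv

/-- `Pd = P†` and `Sh = P^{†/2}`. -/
theorem extended_qp_level_sets {n : ℕ} (P Pd Sh : Matrix (Fin n) (Fin n) ℝ)
    (hP : P.PosSemidef) (hPd : IsMoorePenroseInv P Pd) (hSh : Sh.PosSemidef)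
    (hShPd : Sh * Sh = Pd) (q : Fin n → ℝ) (hq : ∃ y : Fin n → ℝ, P.mulVec y = q)
    (s l : ℝ) (x : Fin n → ℝ) (hx : ∃ y : Fin n → ℝ, P.mulVec y = x) :
    x ⬝ᵥ P.mulVec x / 2 + q ⬝ᵥ x + s = l ↔
      (q ⬝ᵥ Pd.mulVec q - 2 * s + 2 * l ≥ 0 ∧
        ((∃ ρ : Fin n → ℝ, (∃ y : Fin n → ℝ, P.mulVec y = ρ) ∧
            Real.sqrt (ρ ⬝ᵥ ρ) = 1 ∧
            x = -(Pd.mulVec q) +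
              Real.sqrt (q ⬝ᵥ Pd.mulVec q - 2 * s + 2 * l) • Sh.mulVec ρ) ∨
          (Real.sqrt (q ⬝ᵥ Pd.mulVec q - 2 * s + 2 * l) = 0 ∧ x = -(Pd.mulVec q)))) := by
  have hPT : Pᵀ = P := hP.1.eq
  have hPdq : P *ᵥ (Pd *ᵥ q) = q := by rw [mulVec_mulVec, hPd.mul_mulVec_of_mem_range hq]
  have hu : Pd *ᵥ q + x ∈ Set.range P.mulVec := by
    obtain ⟨y, hy⟩ := hPd.mulVec_mem_range hPT q
    obtain ⟨z, rfl⟩ := hx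
    exact ⟨y + z, by rw [mulVec_add, hy]⟩
  have hcomplete : x ⬝ᵥ P *ᵥ x / 2 + q ⬝ᵥ x + s = l ↔
      (Pd *ᵥ q + x) ⬝ᵥ P *ᵥ (Pd *ᵥ q + x) = q ⬝ᵥ Pd *ᵥ q - 2 * s + 2 * l := by
    rw [dotProduct_mulVec_add_self hPT, hPdq, dotProduct_comm (Pd *ᵥ q) q]
    constructor <;> intro <;> linarith
  have hShT : Shᵀ = Sh := hSh.1.eq
  rw [hcomplete, hPd.dotProduct_mulVec_self_eq_iff hP hShT hShPd hu, eq_neg_iff_add_eq_zero,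
    add_comm x]
  simp only [eq_neg_add_iff_add_eq]
  rfl
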